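/- arXiv:1206.6319 — 2 statements merged into one kernel-verified Lean document; each statement's English description precedes it below -/
import Mathlib

section
/- If A is a Conley attractor of an IFS F with basin B, and S is any compact set with A ⊆ S ⊆ B, then lim_{k→∞} F^k(S) = A in the Hausdorff metric. -/
open Set Filter Metric Topology

/-- The set map of an IFS: `F(S) = ⋃ i, fᵢ(S)`. -/
def IFSApply {ι X : Type*} (f : ι → X → X) (S : Set X) : Set X := ⋃ i, f i '' S

/-- `lim_{k→∞} F^k(closure U) = A` in the Hausdorff (extended) metric. -/
def ConleyLim {ι X : Type*} [MetricSpace X] (f : ι → X → X) (U A : Set X) : Prop :=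
  Filter.Tendsto (fun k => EMetric.hausdorffEdist ((IFSApply f)^[k] (closure U)) A)
    Filter.atTop (nhds 0)

/-- A compact set `A` is a Conley attractor of the IFS `f` if there is an open `U ⊇ A`
with `A = lim_{k→∞} F^k(closure U)`. -/
def IsConleyAttractor {ι X : Type*} [MetricSpace X] (f : ι → X → X) (A : Set X) : Prop :=
  IsCompact A ∧ ∃ U : Set X, IsOpen U ∧ A ⊆ U ∧ ConleyLim f U A

/-- The basin of a Conley attractor: the union of all open sets `U` as in the definition. -/
def conleyBasin {ι X : Type*} [MetricSpace X] (f : ι → X → X) (A : Set X) : Set X :=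
  ⋃₀ {U : Set X | IsOpen U ∧ A ⊆ U ∧ ConleyLim f U A}

/-- `lim_{k→∞} F^k(S) = A` in the Hausdorff (extended) metric. -/
def IFSLim {ι X : Type*} [MetricSpace X] (f : ι → X → X) (S A : Set X) : Prop :=
  Filter.Tendsto (fun k => EMetric.hausdorffEdist ((IFSApply f)^[k] S) A)
    Filter.atTop (nhds 0)

/-- `A` is a strict attractor of the IFS `f`. -/
def IsStrictAttractor {ι X : Type*} [MetricSpace X] (f : ι → X → X) (A : Set X) : Prop :=
  A.Nonempty ∧ IsCompact A ∧ IFSApply f A = A ∧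
  ∃ U : Set X, IsOpen U ∧ A ⊆ U ∧
    ∀ S : Set X, S.Nonempty → IsCompact S → S ⊆ U → IFSLim f S A

/-- The basin of a strict attractor: the largest open `U` with
`lim_{k→∞} F^k(S) = A` for all nonempty compact `S ⊆ U`. -/
def strictBasin {ι X : Type*} [MetricSpace X] (f : ι → X → X) (A : Set X) : Set X :=
  ⋃₀ {U : Set X | IsOpen U ∧
    ∀ S : Set X, S.Nonempty → IsCompact S → S ⊆ U → IFSLim f S A}

/-!
Each point of `S` lies in an open set `U` of the basin, so finitely many such sets `U₁, …, Uₙ`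
cover `S`, and `Fᵏ(S) ⊆ ⋃ⱼ Fᵏ(closure Uⱼ)`. Points of `Fᵏ(S)` are therefore close to `A` once
each `Fᵏ(closure Uⱼ)` is. Conversely `A ⊆ Fᵏ(S)`, because `A ⊆ S` and `A` is invariant: `F` is
continuous for the Hausdorff distance at the compact set `A`, so passing to the limit in
`F(Fᵏ(closure U)) = Fᵏ⁺¹(closure U)` gives `F(A) = A`.
-/

theorem tendsto_hausdorffEDist_image_of_isCompact {α β γ : Type*} [PseudoEMetricSpace α]
    [PseudoEMetricSpace β] {g : α → β} {K : Set α} (hK : IsCompact K)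
    (hg : ∀ x ∈ K, ContinuousAt g x) {l : Filter γ} {s : γ → Set α}
    (h : Tendsto (fun n => hausdorffEDist (s n) K) l (𝓝 0)) :
    Tendsto (fun n => hausdorffEDist (g '' s n) (g '' K)) l (𝓝 0) := by
  rw [ENNReal.tendsto_nhds_zero]
  intro ε hε
  obtain ⟨δ, hδ, hδε⟩ := mem_uniformity_edist.mp <|
    hK.uniformContinuousAt_of_continuousAt g hg (edist_mem_uniformity hε)
  have hclose : ∀ {a x}, a ∈ K → edist a x < δ → edist (g a) (g x) ≤ ε :=
    fun ha hax => (hδε hax ha).le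
  filter_upwards [h.eventually (gt_mem_nhds hδ)] with n hn
  refine hausdorffEDist_le_of_mem_edist ?_ ?_
  · rintro _ ⟨x, hx, rfl⟩
    obtain ⟨a, ha, hxa⟩ := exists_edist_lt_of_hausdorffEDist_lt hx hn
    rw [edist_comm] at hxa
    exact ⟨g a, mem_image_of_mem g ha, by rw [edist_comm]; exact hclose ha hxa⟩
  · rintro _ ⟨a, ha, rfl⟩
    obtain ⟨x, hx, hax⟩ := exists_edist_lt_of_hausdorffEDist_lt ha (hausdorffEDist_comm.trans_lt hn)
    exact ⟨g x, mem_image_of_mem g hx, hclose ha hax⟩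

theorem hausdorffEDist_le_sum_of_subset_biUnion {α κ : Type*} [PseudoEMetricSpace α]
    {A T : Set α} {J : Finset κ} {s : κ → Set α} (hAT : A ⊆ T) (hTs : T ⊆ ⋃ j ∈ J, s j) :
    hausdorffEDist T A ≤ ∑ j ∈ J, hausdorffEDist (s j) A := by
  refine hausdorffEDist_le_of_infEDist (fun x hx => ?_) (fun a ha => ?_)
  · obtain ⟨j, hj, hxj⟩ := mem_iUnion₂.mp (hTs hx)
    exact (infEDist_le_hausdorffEDist_of_mem hxj).trans
      (Finset.single_le_sum (f := fun j => hausdorffEDist (s j) A) (fun _ _ => zero_le) hj)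
  · rw [infEDist_zero_of_mem (hAT ha)]
    exact zero_le

section IFS

variable {ι X : Type*} (f : ι → X → X)

theorem IFSApply_mono : Monotone (IFSApply f) :=
  fun _ _ h => iUnion_mono fun _ => image_mono h

theorem IFSApply_iUnion {κ : Sort*} (s : κ → Set X) :
    IFSApply f (⋃ j, s j) = ⋃ j, IFSApply f (s j) := by
  simp only [IFSApply, image_iUnion]
  exact iUnion_comm _

theorem iterate_IFSApply_iUnion {κ : Sort*} (s : κ → Set X) (k : ℕ) :
    (IFSApply f)^[k] (⋃ j, s j) = ⋃ j, (IFSApply f)^[k] (s j) := by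
  induction k with
  | zero => rfl
  | succ k ih => simp only [Function.iterate_succ_apply', ih, IFSApply_iUnion]

variable [MetricSpace X]

theorem isCompact_IFSApply [Finite ι] (hf : ∀ i, Continuous (f i)) {K : Set X}
    (hK : IsCompact K) : IsCompact (IFSApply f K) :=
  isCompact_iUnion fun i => hK.image (hf i)

theorem tendsto_hausdorffEDist_IFSApply {γ : Type*} [Fintype ι] (hf : ∀ i, Continuous (f i))
    {K : Set X} (hK : IsCompact K) {l : Filter γ} {s : γ → Set X}
    (h : Tendsto (fun n => hausdorffEDist (s n) K) l (𝓝 0)) :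
    Tendsto (fun n => hausdorffEDist (IFSApply f (s n)) (IFSApply f K)) l (𝓝 0) := by
  have himage (i : ι) : Tendsto (fun n => hausdorffEDist (f i '' s n) (f i '' K)) l (𝓝 0) :=
    tendsto_hausdorffEDist_image_of_isCompact hK (fun x _ => (hf i).continuousAt) h
  have hsum := tendsto_finsetSum Finset.univ fun i _ => himage i
  rw [Finset.sum_const_zero] at hsum
  refine tendsto_nhds_bot_mono' hsum fun n => hausdorffEDist_iUnion_le.trans (iSup_le fun i => ?_)
  exact Finset.single_le_sum (f := fun i => hausdorffEDist (f i '' s n) (f i '' K))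
    (fun _ _ => zero_le) (Finset.mem_univ i)

theorem IFSApply_eq_of_conleyLim [Fintype ι] (hf : ∀ i, Continuous (f i)) {U A : Set X}
    (hA : IsCompact A) (hU : ConleyLim f U A) : IFSApply f A = A := by
  have hF : Tendsto (fun k => hausdorffEDist (IFSApply f ((IFSApply f)^[k] (closure U)))
      (IFSApply f A)) atTop (𝓝 0) := tendsto_hausdorffEDist_IFSApply f hf hA hU
  have hshift : Tendsto (fun k => hausdorffEDist (IFSApply f ((IFSApply f)^[k] (closure U))) A)
      atTop (𝓝 0) := by
    have := hU.comp (tendsto_add_atTop_nat 1)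
    simp only [Function.comp_def, Function.iterate_succ_apply'] at this
    exact this
  have hzero : hausdorffEDist (IFSApply f A) A = 0 := by
    refine nonpos_iff_eq_zero.mp <| ge_of_tendsto' (by simpa using hF.add hshift) fun k => ?_
    exact hausdorffEDist_triangle.trans_eq (congrArg (· + _) hausdorffEDist_comm)
  exact ((isCompact_IFSApply f hf hA).isClosed.hausdorffEDist_zero_iff hA.isClosed).mp hzero

end IFS

theorem conley_attractor_lim_of_compact_in_basin_general {ι X : Type*} [MetricSpace X]
    [Fintype ι] (f : ι → X → X) (hf : ∀ i, Continuous (f i))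
    (A : Set X) (hA : IsConleyAttractor f A)
    (S : Set X) (hS : IsCompact S) (hAS : A ⊆ S) (hSB : S ⊆ conleyBasin f A) :
    IFSLim f S A := by
  obtain ⟨hAc, U₀, -, -, hU₀⟩ := hA
  have hAk (k : ℕ) : A ⊆ (IFSApply f)^[k] S :=
    Function.iterate_fixed (IFSApply_eq_of_conleyLim f hf hAc hU₀) k ▸
      (IFSApply_mono f).iterate k hAS
  let basin := {U : Set X // IsOpen U ∧ A ⊆ U ∧ ConleyLim f U A}
  obtain ⟨J, hJ⟩ := hS.elim_finite_subcover (fun U : basin => (U : Set X)) (fun U => U.2.1)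
    fun x hx => by
      obtain ⟨U, hU, hxU⟩ := hSB hx
      exact mem_iUnion.2 ⟨⟨U, hU⟩, hxU⟩
  have hSk (k : ℕ) : (IFSApply f)^[k] S ⊆ ⋃ U ∈ J, (IFSApply f)^[k] (closure (U : Set X)) := by
    simp only [← iterate_IFSApply_iUnion]
    exact (IFSApply_mono f).iterate k (hJ.trans (iUnion₂_mono fun U _ => subset_closure))
  have hsum := tendsto_finsetSum J fun (U : basin) _ => U.2.2.2
  rw [Finset.sum_const_zero] at hsum
  exact tendsto_nhds_bot_mono' hsum fun k => hausdorffEDist_le_sum_of_subset_biUnion (hAk k) (hSk k)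

theorem conley_attractor_lim_of_compact_in_basin {ι X : Type*} [MetricSpace X] [CompactSpace X]
    [Fintype ι] [Nonempty ι] (f : ι → X → X) (hf : ∀ i, Continuous (f i))
    (A : Set X) (hA : IsConleyAttractor f A)
    (S : Set X) (hS : IsCompact S) (hAS : A ⊆ S) (hSB : S ⊆ conleyBasin f A) :
    IFSLim f S A :=
  conley_attractor_lim_of_compact_in_basin_general f hf A hA S hS hAS hSB
end

section
/- If A is a Conley attractor of an IFS F on a compact metric space, then the basin of A equals the set of points x such that lim_{k→∞} d⃗(F^k({x}), A) = 0, where d⃗(X,Y) = max_{x∈X} min_{y∈Y} d(x,y). -/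
open Set Filter Metric Topology

/-!
The basin is contained in the right-hand side because `F^k({x}) ⊆ F^k(closure U)` whenever
`x ∈ U`. Conversely, if `d⃗(F^k({x}), A) → 0`, then for some `k` the set `F^k({x})` lies in an
open `U ⊇ A` witnessing the attractor, and then so does `F^k(closure V)` for a small ball `V`
around `x`: `F^k(S) ⊆ U` iff `S ⊆ G^k(U)`, where `G(W) = ⋂ i, fᵢ⁻¹(W)` is the right adjoint of
`F` and preserves open sets. From then on the iterates of `closure V` stay inside those of
`closure U`, so `U ∪ V` is again an open set witnessing the attractor, and it contains `x`.
-/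

theorem GaloisConnection.iterate {α : Type*} [Preorder α] {l u : α → α}
    (gc : GaloisConnection l u) (k : ℕ) : GaloisConnection l^[k] u^[k] := by
  induction k with
  | zero => exact GaloisConnection.id
  | succ k ih =>
    rw [Function.iterate_succ, Function.iterate_succ']
    exact gc.compose ih

section IFS

variable {ι X : Type*} (f : ι → X → X)

def IFSPreimage (W : Set X) : Set X := ⋂ i, f i ⁻¹' W

theorem gc_IFSApply_IFSPreimage : GaloisConnection (IFSApply f) (IFSPreimage f) := fun S W => by
  simp only [IFSApply, IFSPreimage, iUnion_subset_iff, subset_iInter_iff, image_subset_iff]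

theorem IFSApply_iterate_mono (k : ℕ) : Monotone (IFSApply f)^[k] :=
  ((gc_IFSApply_IFSPreimage f).iterate k).monotone_l

theorem IFSApply_iterate_union (k : ℕ) (S T : Set X) :
    (IFSApply f)^[k] (S ∪ T) = (IFSApply f)^[k] S ∪ (IFSApply f)^[k] T :=
  ((gc_IFSApply_IFSPreimage f).iterate k).l_sup

theorem isOpen_IFSPreimage_iterate [TopologicalSpace X] [Finite ι] (hf : ∀ i, Continuous (f i))
    {W : Set X} (hW : IsOpen W) (k : ℕ) : IsOpen ((IFSPreimage f)^[k] W) := by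
  induction k with
  | zero => exact hW
  | succ k ih =>
    rw [Function.iterate_succ_apply']
    exact isOpen_iInter_of_finite fun i => ih.preimage (hf i)

end IFS

section OneSidedDistance

variable {X : Type*} [PseudoEMetricSpace X]

theorem iSup_infEDist_le_hausdorffEDist (S A : Set X) :
    ⨆ y ∈ S, infEDist y A ≤ hausdorffEDist S A :=
  iSup₂_le fun _ hy => infEDist_le_hausdorffEDist_of_mem hy

theorem hausdorffEDist_union_le (S T A : Set X) :
    hausdorffEDist (S ∪ T) A ≤ hausdorffEDist S A ⊔ ⨆ y ∈ T, infEDist y A := by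
  rw [hausdorffEDist_def, iSup_union]
  refine sup_le (sup_le_sup_right (iSup_infEDist_le_hausdorffEDist S A) _) ?_
  refine iSup₂_le fun y hy => le_sup_of_le_left ?_
  calc infEDist y (S ∪ T) ≤ infEDist y S := infEDist_anti subset_union_left
    _ ≤ hausdorffEDist A S := infEDist_le_hausdorffEDist_of_mem hy
    _ = hausdorffEDist S A := hausdorffEDist_comm

theorem tendsto_iSup_infEDist_of_subset {α : Type*} {l : Filter α} {S T : α → Set X}
    {A : Set X} (hT : Tendsto (fun n => hausdorffEDist (T n) A) l (𝓝 0)) (hST : ∀ n, S n ⊆ T n) :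
    Tendsto (fun n => ⨆ y ∈ S n, infEDist y A) l (𝓝 0) :=
  tendsto_of_tendsto_of_tendsto_of_le_of_le tendsto_const_nhds hT (fun _ => zero_le)
    fun n => (biSup_mono fun _ hy => hST n hy).trans (iSup_infEDist_le_hausdorffEDist _ A)

end OneSidedDistance

theorem eventually_subset_of_tendsto_iSup_infEDist {X α : Type*} [PseudoMetricSpace X]
    {l : Filter α} {S : α → Set X} {A U : Set X} (hA : IsCompact A) (hU : IsOpen U)
    (hAU : A ⊆ U) (hS : Tendsto (fun n => ⨆ y ∈ S n, infEDist y A) l (𝓝 0)) :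
    ∀ᶠ n in l, S n ⊆ U := by
  obtain ⟨δ, hδ, hthick⟩ := hA.exists_thickening_subset_open hU hAU
  filter_upwards [hS.eventually (gt_mem_nhds (ENNReal.ofReal_pos.2 hδ))] with n hn y hy
  exact hthick <| mem_thickening_iff_infEDist_lt.2 <|
    (le_iSup₂ (f := fun y _ => infEDist y A) y hy).trans_lt hn

theorem conleyLim_union {ι X : Type*} [MetricSpace X] {f : ι → X → X} {U V A : Set X}
    (hU : ConleyLim f U A) {k : ℕ} (hV : (IFSApply f)^[k] (closure V) ⊆ closure U) :
    ConleyLim f (U ∪ V) A := by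
  have hVlim : Tendsto (fun n => ⨆ y ∈ (IFSApply f)^[n] (closure V), infEDist y A)
      atTop (𝓝 0) := by
    refine (tendsto_add_atTop_iff_nat k).1 (tendsto_iSup_infEDist_of_subset hU fun n => ?_)
    rw [Function.iterate_add_apply]
    exact IFSApply_iterate_mono f n hV
  refine tendsto_of_tendsto_of_tendsto_of_le_of_le tendsto_const_nhds
    (by simpa using hU.max hVlim) (fun _ => zero_le) fun n => ?_
  rw [closure_union, IFSApply_iterate_union]
  exact hausdorffEDist_union_le _ _ _

theorem conley_basin_eq_general {ι X : Type*} [MetricSpace X]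
    [Fintype ι] (f : ι → X → X) (hf : ∀ i, Continuous (f i))
    (A : Set X) (hA : IsConleyAttractor f A) :
    conleyBasin f A =
      {x : X | Filter.Tendsto
        (fun k => ⨆ y ∈ (IFSApply f)^[k] {x}, EMetric.infEdist y A)
        Filter.atTop (nhds 0)} := by
  obtain ⟨hAc, U, hUo, hAU, hU⟩ := hA
  have gc k := (gc_IFSApply_IFSPreimage f).iterate k
  ext x
  constructor
  · rintro ⟨V, ⟨-, -, hV⟩, hxV⟩
    exact tendsto_iSup_infEDist_of_subset hV fun k =>
      IFSApply_iterate_mono f k (singleton_subset_iff.2 (subset_closure hxV))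
  · intro hx
    obtain ⟨k, hk⟩ := (eventually_subset_of_tendsto_iSup_infEDist hAc hUo hAU hx).exists
    obtain ⟨r, hr, hball⟩ := nhds_basis_closedBall.mem_iff.1 <|
      (isOpen_IFSPreimage_iterate f hf hUo k).mem_nhds (singleton_subset_iff.1 ((gc k _ _).1 hk))
    have hV : (IFSApply f)^[k] (closure (ball x r)) ⊆ closure U :=
      ((gc k _ _).2 (closure_ball_subset_closedBall.trans hball)).trans subset_closure
    exact ⟨U ∪ ball x r, ⟨hUo.union isOpen_ball, hAU.trans subset_union_left,
      conleyLim_union hU hV⟩, Or.inr (mem_ball_self hr)⟩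

theorem conley_basin_eq {ι X : Type*} [MetricSpace X] [CompactSpace X]
    [Fintype ι] [Nonempty ι] (f : ι → X → X) (hf : ∀ i, Continuous (f i))
    (A : Set X) (hA : IsConleyAttractor f A) :
    conleyBasin f A =
      {x : X | Filter.Tendsto
        (fun k => ⨆ y ∈ (IFSApply f)^[k] {x}, EMetric.infEdist y A)
        Filter.atTop (nhds 0)} :=
  conley_basin_eq_general f hf A hA
end
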